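/- arXiv:2403.06279 — 4 statements merged into one kernel-verified Lean document; each statement's English description precedes it below -/
import Mathlib

section
/- Let p_pre be a probability density, α > 0, r : ℝ^d → [0,∞) measurable with E_{p_pre}[exp(2r(Y)/α)] < ∞, and p_ftune(y) := exp(r(y)/α) p_pre(y)/C where C := E_{p_pre}[exp(r(Y)/α)]. Then D_KL(p_ftune ‖ p_pre) ≤ (1/2) Var_{p_pre}(exp(r(Y)/α)) ≤ (1/2) E_{p_pre}[exp(2r(Y)/α)]. -/
open MeasureTheory Real

noncomputable def klDivD {d : ℕ} (p q : EuclideanSpace ℝ (Fin d) → ℝ) : ℝ :=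
  ∫ y, p y * Real.log (p y / q y)

def IsProbDensity {d : ℕ} (p : EuclideanSpace ℝ (Fin d) → ℝ) : Prop :=
  Measurable p ∧ (∀ y, 0 ≤ p y) ∧ (∫ y, p y) = 1

noncomputable def tvDist {d : ℕ} (p q : EuclideanSpace ℝ (Fin d) → ℝ) : ℝ :=
  ⨆ A : {s : Set (EuclideanSpace ℝ (Fin d)) // MeasurableSet s},
    |(∫ y in A.1, p y) - ∫ y in A.1, q y|

lemma log_lip {a b : ℝ} (ha : 1 ≤ a) (hab : a ≤ b) : Real.log b - Real.log a ≤ b - a := by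
  have ha0 : (0:ℝ) < a := lt_of_lt_of_le one_pos ha
  have hb0 : (0:ℝ) < b := lt_of_lt_of_le ha0 hab
  rw [← Real.log_div (ne_of_gt hb0) (ne_of_gt ha0)]
  have h1 : Real.log (b / a) ≤ b / a - 1 := Real.log_le_sub_one_of_pos (div_pos hb0 ha0)
  have h2 : b / a ≤ b - a + 1 := by
    rw [div_le_iff₀ ha0]; nlinarith
  linarith

lemma key_ineq {x c : ℝ} (hx : 1 ≤ x) (hc : 1 ≤ c) :
    x * (Real.log x - Real.log c) ≤ (x - c) + (x - c) ^ 2 / 2 := by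
  set F : ℝ → ℝ := fun t => (t - c) + (t - c) ^ 2 / 2 - t * (Real.log t - Real.log c) with hF
  have hderiv : ∀ t : ℝ, 0 < t →
      HasDerivAt F ((t - c) - (Real.log t - Real.log c)) t := by
    intro t ht
    have h1 : HasDerivAt (fun s : ℝ => s - c) 1 t := (hasDerivAt_id t).sub_const c
    have h2 : HasDerivAt (fun s : ℝ => (s - c) ^ 2 / 2) (t - c) t := by
      have := (h1.pow 2).div_const 2
      simpa using this.congr_deriv (by ring)
    have hlog : HasDerivAt (fun s : ℝ => Real.log s - Real.log c) t⁻¹ t :=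
      (Real.hasDerivAt_log (ne_of_gt ht)).sub_const (Real.log c)
    have h3 : HasDerivAt (fun s : ℝ => s * (Real.log s - Real.log c))
        (1 * (Real.log t - Real.log c) + t * t⁻¹) t := (hasDerivAt_id t).mul hlog
    have h4 := (h1.add h2).sub h3
    refine h4.congr_deriv ?_
    rw [mul_inv_cancel₀ (ne_of_gt ht)]
    ring
  have hcont : ∀ t : ℝ, 0 < t → ContinuousAt F t := fun t ht => (hderiv t ht).continuousAt
  have hmono : MonotoneOn F (Set.Ici c) := by
    have hc0 : (0:ℝ) < c := lt_of_lt_of_le one_pos hc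
    apply monotoneOn_of_deriv_nonneg (convex_Ici c)
    · exact fun t ht => (hcont t (lt_of_lt_of_le hc0 ht)).continuousWithinAt
    · intro t ht
      rw [interior_Ici] at ht
      exact (hderiv t (lt_trans hc0 ht)).differentiableAt.differentiableWithinAt
    · intro t ht
      rw [interior_Ici] at ht
      rw [(hderiv t (lt_trans hc0 ht)).deriv]
      have := log_lip hc (le_of_lt ht)
      linarith
  have hanti : AntitoneOn F (Set.Icc 1 c) := by
    apply antitoneOn_of_deriv_nonpos (convex_Icc 1 c)
    · exact fun t ht => (hcont t (lt_of_lt_of_le one_pos ht.1)).continuousWithinAt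
    · intro t ht
      rw [interior_Icc] at ht
      exact (hderiv t (lt_trans one_pos ht.1)).differentiableAt.differentiableWithinAt
    · intro t ht
      rw [interior_Icc] at ht
      rw [(hderiv t (lt_trans one_pos ht.1)).deriv]
      have := log_lip (le_of_lt ht.1) (le_of_lt ht.2)
      linarith
  have hFc : F c = 0 := by simp [hF]
  have hFx : 0 ≤ F x := by
    rcases le_total c x with h | h
    · have := hmono (Set.self_mem_Ici) h h
      rw [hFc] at this; exact this
    · have := hanti ⟨hx, h⟩ ⟨hc, le_refl c⟩ h
      rw [hFc] at this; exact this
  have heq : F x = (x - c) + (x - c) ^ 2 / 2 - x * (Real.log x - Real.log c) := rfl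
  rw [heq] at hFx
  linarith

/-- The KL divergence of the tilted density from the pretrained density is bounded by half the
variance of `exp(r/α)`, which is in turn bounded by half the second moment. -/
theorem stmt_4 {d : ℕ} (ppre r : EuclideanSpace ℝ (Fin d) → ℝ) (α : ℝ) (hα : 0 < α)
    (hpre : IsProbDensity ppre) (hr : Measurable r) (hrpos : ∀ y, 0 ≤ r y)
    (h2 : Integrable (fun y => Real.exp (2 * r y / α) * ppre y)) :
    klDivD (fun y => Real.exp (r y / α) * ppre y / ∫ z, Real.exp (r z / α) * ppre z) ppre ≤
        (1 / 2) *
          ((∫ y, Real.exp (r y / α) ^ 2 * ppre y) - (∫ y, Real.exp (r y / α) * ppre y) ^ 2) ∧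
      (1 / 2) *
          ((∫ y, Real.exp (r y / α) ^ 2 * ppre y) - (∫ y, Real.exp (r y / α) * ppre y) ^ 2) ≤
        (1 / 2) * ∫ y, Real.exp (2 * r y / α) * ppre y := by
  obtain ⟨hpm, hpnn, hpint⟩ := hpre
  set g : EuclideanSpace ℝ (Fin d) → ℝ := fun y => Real.exp (r y / α) with hg
  have hgm : Measurable g := (hr.div_const α).exp
  have hg1 : ∀ y, 1 ≤ g y := fun y => Real.one_le_exp (div_nonneg (hrpos y) hα.le)
  have hg0 : ∀ y, 0 < g y := fun y => lt_of_lt_of_le one_pos (hg1 y)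
  have hp_int : Integrable ppre := by
    by_contra h
    rw [integral_undef h] at hpint
    norm_num at hpint
  have hg2eq : (fun y => Real.exp (2 * r y / α) * ppre y) = fun y => g y ^ 2 * ppre y := by
    funext y
    have h1 : 2 * r y / α = r y / α + r y / α := by ring
    rw [hg, h1, Real.exp_add, sq]
  have hg2_int : Integrable (fun y => g y ^ 2 * ppre y) := by rwa [hg2eq] at h2
  have hgp_int : Integrable (fun y => g y * ppre y) := by
    apply hg2_int.mono (hgm.mul hpm).aestronglyMeasurable
    filter_upwards with y
    rw [Real.norm_eq_abs, Real.norm_eq_abs, Pi.mul_apply,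
        abs_of_nonneg (mul_nonneg (hg0 y).le (hpnn y)),
        abs_of_nonneg (mul_nonneg (sq_nonneg _) (hpnn y))]
    nlinarith [mul_nonneg (mul_nonneg (hpnn y) (hg0 y).le) (sub_nonneg.mpr (hg1 y))]
  set C : ℝ := ∫ z, Real.exp (r z / α) * ppre z with hCdef
  have hCgp : C = ∫ y, g y * ppre y := rfl
  have hC1 : 1 ≤ C := by
    rw [hCgp, ← hpint]
    exact integral_mono hp_int hgp_int fun y => le_mul_of_one_le_left (hpnn y) (hg1 y)
  have hC0 : (0:ℝ) < C := lt_of_lt_of_le one_pos hC1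
  set M2 : ℝ := ∫ y, Real.exp (r y / α) ^ 2 * ppre y with hM2def
  have hM2g : M2 = ∫ y, g y ^ 2 * ppre y := rfl
  -- integrability of the KL integrand rewritten
  have hF_int : Integrable (fun y => ppre y * (g y * (Real.log (g y) - Real.log C)) / C) := by
    apply (hg2_int.const_mul 2).mono
      ((hpm.mul (hgm.mul (hgm.log.sub measurable_const))).div_const C).aestronglyMeasurable
    filter_upwards with y
    have hlg : 0 ≤ Real.log (g y) := Real.log_nonneg (hg1 y)
    have hlgu : Real.log (g y) ≤ g y :=
      le_trans (Real.log_le_sub_one_of_pos (hg0 y)) (by linarith [hg0 y])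
    have hlC : 0 ≤ Real.log C := Real.log_nonneg hC1
    have hlCu : Real.log C ≤ C :=
      le_trans (Real.log_le_sub_one_of_pos hC0) (by linarith)
    have habs : |Real.log (g y) - Real.log C| ≤ g y + C := by
      rw [abs_sub_le_iff]
      constructor <;> linarith [hC0, hg0 y]
    simp only [Pi.mul_apply, Pi.sub_apply]
    rw [Real.norm_eq_abs, Real.norm_eq_abs, abs_div, abs_of_nonneg hC0.le, abs_mul,
        abs_of_nonneg (hpnn y), abs_mul, abs_of_nonneg (hg0 y).le,
        abs_of_nonneg (mul_nonneg (by norm_num) (mul_nonneg (sq_nonneg _) (hpnn y)) :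
          (0:ℝ) ≤ 2 * (g y ^ 2 * ppre y)),
        div_le_iff₀ hC0]
    nlinarith [mul_le_mul_of_nonneg_left habs (mul_nonneg (hpnn y) (hg0 y).le),
      mul_nonneg (mul_nonneg (mul_nonneg (hpnn y) (hg0 y).le) (hg0 y).le)
        (sub_nonneg.mpr hC1),
      mul_nonneg (mul_nonneg (mul_nonneg (hpnn y) (hg0 y).le) hC0.le)
        (sub_nonneg.mpr (hg1 y))]
  -- the dominating integrand
  have hHdecomp : (fun y => ppre y * ((g y - C) + (g y - C) ^ 2 / 2) / C)
      = fun y => (1 / (2 * C)) * (g y ^ 2 * ppre y) + ((1 - C) / C) * (g y * ppre y)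
          + (C / 2 - 1) * ppre y := by
    funext y
    field_simp
    ring
  have hH_int : Integrable (fun y => ppre y * ((g y - C) + (g y - C) ^ 2 / 2) / C) := by
    rw [hHdecomp]
    exact ((hg2_int.const_mul _).add (hgp_int.const_mul _)).add (hp_int.const_mul _)
  have hH_val : (∫ y, ppre y * ((g y - C) + (g y - C) ^ 2 / 2) / C) = (M2 - C ^ 2) / (2 * C) := by
    have i1 : Integrable (fun y => 1 / (2 * C) * (g y ^ 2 * ppre y)) := hg2_int.const_mul _
    have i2 : Integrable (fun y => (1 - C) / C * (g y * ppre y)) := hgp_int.const_mul _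
    have i12 : Integrable (fun y => 1 / (2 * C) * (g y ^ 2 * ppre y)
        + (1 - C) / C * (g y * ppre y)) := i1.add i2
    have i3 : Integrable (fun y => (C / 2 - 1) * ppre y) := hp_int.const_mul _
    rw [hHdecomp, integral_add i12 i3, integral_add i1 i2,
        integral_const_mul _ _, integral_const_mul _ _, integral_const_mul _ _, hpint, ← hCgp, ← hM2g]
    field_simp
    ring
  have hvar : 0 ≤ M2 - C ^ 2 := by
    have h0 : 0 ≤ ∫ y, ppre y * (g y - C) ^ 2 :=
      integral_nonneg fun y => mul_nonneg (hpnn y) (sq_nonneg _)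
    have heq : (fun y => ppre y * (g y - C) ^ 2)
        = fun y => (g y ^ 2 * ppre y) - (2 * C) * (g y * ppre y) + C ^ 2 * ppre y := by
      funext y; ring
    have j0 : Integrable (fun y => (2 * C) * (g y * ppre y)) := hgp_int.const_mul _
    have j1 : Integrable (fun y => g y ^ 2 * ppre y - (2 * C) * (g y * ppre y)) :=
      hg2_int.sub j0
    have j2 : Integrable (fun y => C ^ 2 * ppre y) := hp_int.const_mul _
    rw [heq, integral_add j1 j2, integral_sub hg2_int j0, integral_const_mul _ _,
        integral_const_mul _ _, hpint, ← hCgp, ← hM2g] at h0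
    nlinarith [h0]
  have hmono_int : (∫ y, ppre y * (g y * (Real.log (g y) - Real.log C)) / C)
      ≤ ∫ y, ppre y * ((g y - C) + (g y - C) ^ 2 / 2) / C := by
    apply integral_mono hF_int hH_int
    intro y
    have hk := key_ineq (hg1 y) hC1
    have h := mul_le_mul_of_nonneg_left hk (hpnn y)
    exact (div_le_div_iff_of_pos_right hC0).mpr h
  constructor
  · show (∫ y, (Real.exp (r y / α) * ppre y / C) *
        Real.log ((Real.exp (r y / α) * ppre y / C) / ppre y)) ≤ 1 / 2 * (M2 - C ^ 2)
    have hFeq : (fun y => (Real.exp (r y / α) * ppre y / C) *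
          Real.log ((Real.exp (r y / α) * ppre y / C) / ppre y))
        = fun y => ppre y * (g y * (Real.log (g y) - Real.log C)) / C := by
      funext y
      simp only [hg]
      rcases eq_or_lt_of_le (hpnn y) with h0 | h0
      · simp [← h0]
      · have hpy : ppre y ≠ 0 := ne_of_gt h0
        have h1 : (Real.exp (r y / α) * ppre y / C) / ppre y = Real.exp (r y / α) / C := by
          field_simp
        rw [h1, Real.log_div (Real.exp_ne_zero _) (ne_of_gt hC0)]
        ring
    rw [hFeq]
    calc (∫ y, ppre y * (g y * (Real.log (g y) - Real.log C)) / C)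
        ≤ ∫ y, ppre y * ((g y - C) + (g y - C) ^ 2 / 2) / C := hmono_int
      _ = (M2 - C ^ 2) / (2 * C) := hH_val
      _ ≤ 1 / 2 * (M2 - C ^ 2) := by
          have hle : (M2 - C ^ 2) / (2 * C) ≤ (M2 - C ^ 2) / 2 := by
            gcongr
            · linarith
          linarith
  · have h2eq : (∫ y, Real.exp (2 * r y / α) * ppre y) = ∫ y, g y ^ 2 * ppre y := by
      rw [hg2eq]
    rw [h2eq, ← hM2g]
    nlinarith [sq_nonneg C]
end

section
/- Let p_data, p_pre be probability densities, α > 0, r : ℝ^d → [0,∞) measurable with E_{p_pre}[exp(2r(Y)/α)] < ∞, and p_ftune(y) := exp(r(y)/α) p_pre(y)/C with C the normalizing constant. Then D_TV(p_ftune, p_data) ≤ D_TV(p_pre, p_data) + (1/2)·sqrt(E_{p_pre}[exp(2r(Y)/α)]). -/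
open MeasureTheory Real

/-! Tilting by a weight `w ≥ 1` moves a density `p` by at most `∫ w p` in `L¹`, because both
`w p / ∫ w p` and `p` lie between `0` and `w p`; and `∫ w p ≤ √(∫ w² p)` by Cauchy–Schwarz. Half of
the `L¹` distance bounds the total variation distance, and the triangle inequality for `tvDist`
finishes the proof. -/

section General

variable {Ω : Type*} [MeasurableSpace Ω] {μ : Measure Ω}

theorem abs_setIntegral_sub_le_half_integral_abs_sub {f g : Ω → ℝ} (hf : Integrable f μ)
    (hg : Integrable g μ) (hfg : ∫ x, f x ∂μ = ∫ x, g x ∂μ) {s : Set Ω} (hs : MeasurableSet s) :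
    |(∫ x in s, f x ∂μ) - ∫ x in s, g x ∂μ| ≤ (1 / 2) * ∫ x, |f x - g x| ∂μ := by
  have hfg' : Integrable (fun x => f x - g x) μ := hf.sub hg
  rw [← integral_sub hf.integrableOn hg.integrableOn]
  -- the differences on `s` and on `sᶜ` cancel, so each is at most half of the total mass
  have hcancel : (∫ x in s, f x - g x ∂μ) = -∫ x in sᶜ, f x - g x ∂μ := by
    have := integral_add_compl hs hfg'
    rw [integral_sub hf hg, hfg, sub_self] at this
    linarith
  have hs_le := abs_integral_le_integral_abs (μ := μ.restrict s) (f := fun x => f x - g x)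
  have hsc_le := abs_integral_le_integral_abs (μ := μ.restrict sᶜ) (f := fun x => f x - g x)
  rw [← integral_add_compl hs hfg'.abs]
  rw [hcancel, abs_neg] at hs_le ⊢
  linarith

theorem sq_integral_mul_le_integral_sq_mul {w p : Ω → ℝ} (hp : ∀ x, 0 ≤ p x)
    (hp_int : Integrable p μ) (hp_one : ∫ x, p x ∂μ = 1) (hwp : Integrable (fun x => w x * p x) μ)
    (hw2p : Integrable (fun x => w x ^ 2 * p x) μ) :
    (∫ x, w x * p x ∂μ) ^ 2 ≤ ∫ x, w x ^ 2 * p x ∂μ := by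
  set C := ∫ x, w x * p x ∂μ
  -- integrate `0 ≤ (w - C)² p`
  have hpointwise : ∀ x, 2 * C * (w x * p x) ≤ w x ^ 2 * p x + C ^ 2 * p x := fun x => by
    nlinarith [mul_nonneg (sq_nonneg (w x - C)) (hp x)]
  have h : ∫ x, 2 * C * (w x * p x) ∂μ ≤ ∫ x, w x ^ 2 * p x + C ^ 2 * p x ∂μ :=
    integral_mono (hwp.const_mul _) (hw2p.add (hp_int.const_mul _)) hpointwise
  rw [integral_const_mul, integral_add hw2p (hp_int.const_mul _), integral_const_mul,
    hp_one] at h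
  nlinarith

theorem integrable_mul_of_integrable_sq_mul {w p : Ω → ℝ} (hw : ∀ x, 1 ≤ w x)
    (hp : ∀ x, 0 ≤ p x) (hwp : AEStronglyMeasurable (fun x => w x * p x) μ)
    (hw2p : Integrable (fun x => w x ^ 2 * p x) μ) : Integrable (fun x => w x * p x) μ := by
  refine hw2p.mono' hwp (Filter.Eventually.of_forall fun x => ?_)
  have hw0 : 0 ≤ w x := zero_le_one.trans (hw x)
  rw [Real.norm_eq_abs, abs_of_nonneg (mul_nonneg hw0 (hp x))]
  exact mul_le_mul_of_nonneg_right (by nlinarith [hw x]) (hp x)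

theorem one_le_integral_mul {w p : Ω → ℝ} (hw : ∀ x, 1 ≤ w x) (hp : ∀ x, 0 ≤ p x)
    (hp_int : Integrable p μ) (hp_one : ∫ x, p x ∂μ = 1)
    (hwp : Integrable (fun x => w x * p x) μ) : 1 ≤ ∫ x, w x * p x ∂μ :=
  hp_one ▸ integral_mono hp_int hwp fun x => le_mul_of_one_le_left (hp x) (hw x)

theorem integral_abs_div_integral_sub_le {w p : Ω → ℝ} (hw : ∀ x, 1 ≤ w x) (hp : ∀ x, 0 ≤ p x)
    (hp_int : Integrable p μ) (hp_one : ∫ x, p x ∂μ = 1)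
    (hwp : Integrable (fun x => w x * p x) μ) :
    ∫ x, |w x * p x / (∫ z, w z * p z ∂μ) - p x| ∂μ ≤ ∫ x, w x * p x ∂μ := by
  set C := ∫ x, w x * p x ∂μ
  have hp_le : ∀ x, p x ≤ w x * p x := fun x => le_mul_of_one_le_left (hp x) (hw x)
  have hC : 1 ≤ C := one_le_integral_mul hw hp hp_int hp_one hwp
  refine integral_mono ((hwp.div_const C).sub hp_int).abs hwp fun x => ?_
  have hwp0 : 0 ≤ w x * p x := (hp x).trans (hp_le x)
  have htilt_le : w x * p x / C ≤ w x * p x := div_le_self hwp0 hC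
  have htilt0 : 0 ≤ w x * p x / C := div_nonneg hwp0 (zero_le_one.trans hC)
  rw [abs_sub_le_iff]
  constructor <;> linarith [hp x, hp_le x]

end General

section Density

variable {d : ℕ}

theorem IsProbDensity.integrable {p : EuclideanSpace ℝ (Fin d) → ℝ} (hp : IsProbDensity p) :
    Integrable p := by
  by_contra h
  have := hp.2.2
  rw [integral_undef h] at this
  exact zero_ne_one this

theorem IsProbDensity.div_integral {w p : EuclideanSpace ℝ (Fin d) → ℝ} (hp : IsProbDensity p)
    (hw_meas : Measurable w) (hw : ∀ y, 1 ≤ w y) (hwp : Integrable fun y => w y * p y) :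
    IsProbDensity fun y => w y * p y / ∫ z, w z * p z := by
  have hC : 1 ≤ ∫ z, w z * p z := one_le_integral_mul hw hp.2.1 hp.integrable hp.2.2 hwp
  obtain ⟨hp_meas, hp_nonneg, -⟩ := hp
  refine ⟨(hw_meas.mul hp_meas).div_const _, fun y => ?_, ?_⟩
  · exact div_nonneg (mul_nonneg (zero_le_one.trans (hw y)) (hp_nonneg y)) (zero_le_one.trans hC)
  · rw [integral_div, div_self (zero_lt_one.trans_le hC).ne']

theorem abs_setIntegral_sub_le_tvDist {p q : EuclideanSpace ℝ (Fin d) → ℝ} (hp : IsProbDensity p)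
    (hq : IsProbDensity q) (A : {s : Set (EuclideanSpace ℝ (Fin d)) // MeasurableSet s}) :
    |(∫ y in A.1, p y) - ∫ y in A.1, q y| ≤ tvDist p q :=
  le_ciSup ⟨_, Set.forall_mem_range.2 fun B => abs_setIntegral_sub_le_half_integral_abs_sub
    hp.integrable hq.integrable (hp.2.2.trans hq.2.2.symm) B.2⟩ A

theorem tvDist_le_half_integral_abs_sub {p q : EuclideanSpace ℝ (Fin d) → ℝ}
    (hp : IsProbDensity p) (hq : IsProbDensity q) :
    tvDist p q ≤ (1 / 2) * ∫ y, |p y - q y| :=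
  have : Nonempty {s : Set (EuclideanSpace ℝ (Fin d)) // MeasurableSet s} := ⟨⟨∅, .empty⟩⟩
  ciSup_le fun A => abs_setIntegral_sub_le_half_integral_abs_sub
    hp.integrable hq.integrable (hp.2.2.trans hq.2.2.symm) A.2

theorem tvDist_triangle {p q m : EuclideanSpace ℝ (Fin d) → ℝ} (hp : IsProbDensity p)
    (hq : IsProbDensity q) (hm : IsProbDensity m) :
    tvDist p q ≤ tvDist p m + tvDist m q :=
  have : Nonempty {s : Set (EuclideanSpace ℝ (Fin d)) // MeasurableSet s} := ⟨⟨∅, .empty⟩⟩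
  ciSup_le fun A => (abs_sub_le _ _ _).trans <|
    add_le_add (abs_setIntegral_sub_le_tvDist hp hm A) (abs_setIntegral_sub_le_tvDist hm hq A)

end Density

/-- Proposition 3.2: total-variation bound for the fine-tuned density. -/
theorem stmt_5 {d : ℕ} (pdata ppre r : EuclideanSpace ℝ (Fin d) → ℝ) (α : ℝ) (hα : 0 < α)
    (hdata : IsProbDensity pdata) (hpre : IsProbDensity ppre)
    (hr : Measurable r) (hrpos : ∀ y, 0 ≤ r y)
    (h2 : Integrable (fun y => Real.exp (2 * r y / α) * ppre y)) :
    tvDist (fun y => Real.exp (r y / α) * ppre y / ∫ z, Real.exp (r z / α) * ppre z) pdata ≤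
      tvDist ppre pdata +
        (1 / 2) * Real.sqrt (∫ y, Real.exp (2 * r y / α) * ppre y) := by
  have hw : ∀ y, 1 ≤ exp (r y / α) := fun y => one_le_exp (div_nonneg (hrpos y) hα.le)
  have hw_meas : Measurable fun y => exp (r y / α) := (hr.div_const α).exp
  have hw_sq : ∀ y, exp (2 * r y / α) = exp (r y / α) ^ 2 := fun y => by
    rw [← exp_nat_mul]; ring_nf
  simp only [hw_sq] at h2 ⊢
  have hwp : Integrable fun y => exp (r y / α) * ppre y :=
    integrable_mul_of_integrable_sq_mul hw hpre.2.1
      (hw_meas.mul hpre.1).aestronglyMeasurable h2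
  have hft := hpre.div_integral hw_meas hw hwp
  have hC_le : ∫ y, exp (r y / α) * ppre y ≤ √(∫ y, exp (r y / α) ^ 2 * ppre y) :=
    (le_abs_self _).trans <| Real.abs_le_sqrt <|
      sq_integral_mul_le_integral_sq_mul hpre.2.1 hpre.integrable hpre.2.2 hwp h2
  have hL1 := integral_abs_div_integral_sub_le hw hpre.2.1 hpre.integrable hpre.2.2 hwp
  linarith [tvDist_triangle hft hdata hpre, tvDist_le_half_integral_abs_sub hft hpre]
end

section
/- Let p_data, p_pre be probability densities, α > 0, and r : ℝ^d → [0, r̄] a bounded measurable reward. With p_ftune the exponential tilting of p_pre by r/α, one has D_TV(p_ftune, p_data) ≤ D_TV(p_pre, p_data) + (1/2)·exp(r̄/α). -/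
open MeasureTheory Real

/-- Bounded-reward total-variation bound for the fine-tuned density. -/
theorem stmt_6 {d : ℕ} (pdata ppre r : EuclideanSpace ℝ (Fin d) → ℝ) (α rbar : ℝ)
    (hα : 0 < α) (hdata : IsProbDensity pdata) (hpre : IsProbDensity ppre)
    (hr : Measurable r) (hrbd : ∀ y, r y ∈ Set.Icc (0 : ℝ) rbar) :
    tvDist (fun y => Real.exp (r y / α) * ppre y / ∫ z, Real.exp (r z / α) * ppre z) pdata ≤
      tvDist ppre pdata + (1 / 2) * Real.exp (rbar / α) := by
  obtain ⟨hpm, hpnn, hpint⟩ := hpre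
  obtain ⟨hdm, hdnn, hdint⟩ := hdata
  have hMnn : 0 ≤ rbar := le_trans (hrbd 0).1 (hrbd 0).2
  set M := Real.exp (rbar / α) with hMdef
  have hM1 : 1 ≤ M := Real.one_le_exp (by positivity)
  have hppre_int : Integrable ppre := by
    by_contra h
    rw [integral_undef h] at hpint
    norm_num at hpint
  have hdata_int : Integrable pdata := by
    by_contra h
    rw [integral_undef h] at hdint
    norm_num at hdint
  set g : EuclideanSpace ℝ (Fin d) → ℝ := fun y => Real.exp (r y / α) * ppre y with hgdef
  have hg_meas : Measurable g := ((hr.div_const α).exp).mul hpm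
  have hg_nn : ∀ y, 0 ≤ g y := fun y => mul_nonneg (Real.exp_pos _).le (hpnn y)
  have hexp1 : ∀ y, 1 ≤ Real.exp (r y / α) := fun y =>
    Real.one_le_exp (div_nonneg (hrbd y).1 hα.le)
  have hexpM : ∀ y, Real.exp (r y / α) ≤ M := fun y =>
    Real.exp_le_exp.mpr (by gcongr; exact (hrbd y).2)
  have hg_lb : ∀ y, ppre y ≤ g y := fun y => by
    have := hexp1 y; have := hpnn y; simp only [hgdef]; nlinarith
  have hg_ub : ∀ y, g y ≤ M * ppre y := fun y => by
    have := hexpM y; have := hpnn y; simp only [hgdef]; nlinarith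
  have hg_int : Integrable g := by
    refine (hppre_int.const_mul M).mono' hg_meas.aestronglyMeasurable ?_
    refine ae_of_all _ fun y => ?_
    rw [Real.norm_eq_abs, abs_of_nonneg (hg_nn y)]
    exact hg_ub y
  set C := ∫ z, g z with hCdef
  have hC1 : 1 ≤ C := by
    rw [← hpint]; exact integral_mono hppre_int hg_int hg_lb
  have hCM : C ≤ M := by
    calc C ≤ ∫ z, M * ppre z := integral_mono hg_int (hppre_int.const_mul M) hg_ub
    _ = M := by rw [integral_const_mul, hpint, mul_one]
  have hC0 : 0 < C := lt_of_lt_of_le one_pos hC1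
  set f : EuclideanSpace ℝ (Fin d) → ℝ := fun y => g y / C with hfdef
  have hf_int : Integrable f := hg_int.div_const C
  have hf_total : (∫ y, f y) = 1 := by
    simp only [hfdef]
    rw [integral_div, ← hCdef, div_self hC0.ne']
  set h : EuclideanSpace ℝ (Fin d) → ℝ := fun y => f y - ppre y with hhdef
  have hh_int : Integrable h := hf_int.sub hppre_int
  have hh_total : (∫ y, h y) = 0 := by
    simp only [hhdef]
    rw [integral_sub hf_int hppre_int, hf_total, hpint, sub_self]
  -- pointwise bound |h y| ≤ (M - 1) * ppre y
  have hh_bd : ∀ y, |h y| ≤ (M - 1) * ppre y := by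
    intro y
    have hpy := hpnn y
    have h1 := hexp1 y
    have h2 := hexpM y
    have hrewrite : h y = (Real.exp (r y / α) / C - 1) * ppre y := by
      simp only [hhdef, hfdef, hgdef]; field_simp
    rw [hrewrite, abs_mul, abs_of_nonneg hpy]
    have hfac : |Real.exp (r y / α) / C - 1| ≤ M - 1 := by
      rw [abs_le]
      constructor
      · have hx : 1 / M ≤ Real.exp (r y / α) / C :=
          div_le_div₀ (by positivity) h1 hC0 hCM
        have h2M : 2 - M ≤ 1 / M := by
          rw [le_div_iff₀ (by linarith)]
          nlinarith [sq_nonneg (M - 1)]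
        linarith
      · have hx : Real.exp (r y / α) / C ≤ M / 1 :=
          div_le_div₀ (by positivity) h2 one_pos hC1
        rw [div_one] at hx
        linarith
    nlinarith
  have habs_int : Integrable (fun y => |h y|) := hh_int.abs
  have hL1 : (∫ y, |h y|) ≤ M - 1 := by
    calc (∫ y, |h y|) ≤ ∫ y, (M - 1) * ppre y :=
          integral_mono habs_int (hppre_int.const_mul _) hh_bd
    _ = M - 1 := by rw [integral_const_mul, hpint, mul_one]
  -- per-set bound for the tilted vs ppre
  have hkey : ∀ (A : Set (EuclideanSpace ℝ (Fin d))), MeasurableSet A →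
      |(∫ y in A, f y) - ∫ y in A, ppre y| ≤ (1 / 2) * M := by
    intro A hA
    have hsplit : (∫ y in A, h y) + (∫ y in Aᶜ, h y) = 0 := by
      rw [integral_add_compl hA hh_int, hh_total]
    have habs_split : (∫ y in A, |h y|) + (∫ y in Aᶜ, |h y|) = ∫ y, |h y| :=
      integral_add_compl hA habs_int
    have hb1 : |∫ y in A, h y| ≤ ∫ y in A, |h y| := by
      simpa [Real.norm_eq_abs] using
        norm_integral_le_integral_norm (μ := volume.restrict A) h
    have hb2 : |∫ y in Aᶜ, h y| ≤ ∫ y in Aᶜ, |h y| := by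
      simpa [Real.norm_eq_abs] using
        norm_integral_le_integral_norm (μ := volume.restrict Aᶜ) h
    have heqA : (∫ y in A, f y) - ∫ y in A, ppre y = ∫ y in A, h y := by
      rw [← integral_sub hf_int.integrableOn hppre_int.integrableOn]
    rw [heqA]
    have : |∫ y in A, h y| = |∫ y in Aᶜ, h y| := by
      rw [show (∫ y in A, h y) = -(∫ y in Aᶜ, h y) by linarith, abs_neg]
    nlinarith
  -- bounded above for the ppre/pdata sup
  have hbdd : BddAbove (Set.range fun A : {s : Set (EuclideanSpace ℝ (Fin d)) // MeasurableSet s} =>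
      |(∫ y in A.1, ppre y) - ∫ y in A.1, pdata y|) := by
    refine ⟨2, ?_⟩
    rintro x ⟨A, rfl⟩
    have h1 : (0:ℝ) ≤ ∫ y in A.1, ppre y := setIntegral_nonneg A.2 fun y _ => hpnn y
    have h2 : (∫ y in A.1, ppre y) ≤ 1 := by
      rw [← hpint]; exact setIntegral_le_integral hppre_int (ae_of_all _ hpnn)
    have h3 : (0:ℝ) ≤ ∫ y in A.1, pdata y := setIntegral_nonneg A.2 fun y _ => hdnn y
    have h4 : (∫ y in A.1, pdata y) ≤ 1 := by
      rw [← hdint]; exact setIntegral_le_integral hdata_int (ae_of_all _ hdnn)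
    rw [abs_le]; constructor <;> linarith
  rw [tvDist]
  refine ciSup_le fun A => ?_
  have htri : |(∫ y in A.1, f y) - ∫ y in A.1, pdata y| ≤
      |(∫ y in A.1, ppre y) - ∫ y in A.1, pdata y| +
      |(∫ y in A.1, f y) - ∫ y in A.1, ppre y| := by
    have := abs_sub_le (∫ y in A.1, f y) (∫ y in A.1, ppre y) (∫ y in A.1, pdata y)
    linarith
  have hle : |(∫ y in A.1, ppre y) - ∫ y in A.1, pdata y| ≤ tvDist ppre pdata :=
    le_ciSup hbdd A
  have := hkey A.1 A.2
  calc |(∫ y in A.1, f y) - ∫ y in A.1, pdata y| ≤ _ := htri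
  _ ≤ tvDist ppre pdata + (1/2) * M := by linarith
end

section
/- Let p_data, p_pre be probability densities, and let g : ℝ^d → (0,∞) be measurable with κ := inf_y log g(y) > −∞ and E_{p_pre}[g(Y)²] < ∞. Define p^f_ftune(y) := g(y) p_pre(y)/C_f with C_f := E_{p_pre}[g(Y)]. Then D_TV(p^f_ftune, p_data) ≤ D_TV(p_pre, p_data) + (e^{−κ}/2)·sqrt(E_{p_pre}[g(Y)²]). -/
open MeasureTheory Real

private lemma abs_int_le {α : Type*} [MeasurableSpace α] {μ : Measure α} (f : α → ℝ) :
    |∫ x, f x ∂μ| ≤ ∫ x, |f x| ∂μ := by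
  simpa [Real.norm_eq_abs] using norm_integral_le_integral_norm (μ := μ) f

private lemma abs_setInteg_le {d : ℕ} {p q : EuclideanSpace ℝ (Fin d) → ℝ}
    (hp : Integrable p) (hq : Integrable q) (A : Set (EuclideanSpace ℝ (Fin d))) :
    |(∫ y in A, p y) - ∫ y in A, q y| ≤ ∫ y, |p y - q y| := by
  rw [← integral_sub (hp.restrict) (hq.restrict)]
  calc |∫ y in A, (p y - q y)| ≤ ∫ y in A, |p y - q y| := abs_int_le _
    _ ≤ ∫ y, |p y - q y| :=
      setIntegral_le_integral (hp.sub hq).abs (Filter.Eventually.of_forall fun x => abs_nonneg _)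

private lemma tv_triangle {d : ℕ} {p q r : EuclideanSpace ℝ (Fin d) → ℝ}
    (hp : Integrable p) (hq : Integrable q) (hr : Integrable r) :
    tvDist p q ≤ tvDist p r + tvDist r q := by
  haveI : Nonempty {s : Set (EuclideanSpace ℝ (Fin d)) // MeasurableSet s} :=
    ⟨⟨∅, MeasurableSet.empty⟩⟩
  have b1 : BddAbove (Set.range fun A : {s : Set (EuclideanSpace ℝ (Fin d)) // MeasurableSet s} =>
      |(∫ y in A.1, p y) - ∫ y in A.1, r y|) := by
    refine ⟨∫ y, |p y - r y|, ?_⟩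
    rintro x ⟨A, rfl⟩
    exact abs_setInteg_le hp hr A.1
  have b2 : BddAbove (Set.range fun A : {s : Set (EuclideanSpace ℝ (Fin d)) // MeasurableSet s} =>
      |(∫ y in A.1, r y) - ∫ y in A.1, q y|) := by
    refine ⟨∫ y, |r y - q y|, ?_⟩
    rintro x ⟨A, rfl⟩
    exact abs_setInteg_le hr hq A.1
  refine ciSup_le fun A => ?_
  calc |(∫ y in A.1, p y) - ∫ y in A.1, q y|
      ≤ |(∫ y in A.1, p y) - ∫ y in A.1, r y| + |(∫ y in A.1, r y) - ∫ y in A.1, q y| :=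
        abs_sub_le _ _ _
    _ ≤ tvDist p r + tvDist r q := add_le_add (le_ciSup b1 A) (le_ciSup b2 A)

private lemma tv_le_half {d : ℕ} {p q : EuclideanSpace ℝ (Fin d) → ℝ}
    (hp : Integrable p) (hq : Integrable q) (heq : (∫ y, p y) = ∫ y, q y) :
    tvDist p q ≤ (∫ y, |p y - q y|) / 2 := by
  haveI : Nonempty {s : Set (EuclideanSpace ℝ (Fin d)) // MeasurableSet s} :=
    ⟨⟨∅, MeasurableSet.empty⟩⟩
  refine ciSup_le fun A => ?_
  have h0 : (∫ y, (p y - q y)) = 0 := by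
    rw [integral_sub hp hq, heq, sub_self]
  have hsub : Integrable (fun y => p y - q y) := hp.sub hq
  have hcompl := integral_add_compl A.2 hsub
  rw [h0] at hcompl
  have e1 : (∫ y in A.1, p y) - ∫ y in A.1, q y = ∫ y in A.1, (p y - q y) :=
    (integral_sub hp.restrict hq.restrict).symm
  have habs : (∫ y in A.1, |p y - q y|) + ∫ y in A.1ᶜ, |p y - q y| = ∫ y, |p y - q y| :=
    integral_add_compl A.2 hsub.abs
  have h1 : |∫ y in A.1, (p y - q y)| ≤ ∫ y in A.1, |p y - q y| := abs_int_le _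
  have h2 : |∫ y in A.1, (p y - q y)| ≤ ∫ y in A.1ᶜ, |p y - q y| := by
    have : (∫ y in A.1, (p y - q y)) = -(∫ y in A.1ᶜ, (p y - q y)) := by linarith
    rw [this, abs_neg]
    exact abs_int_le _
  rw [e1]
  linarith

/-- Corollary in Section 4: total-variation bound for `f`-divergence fine-tuning, with
`g(y) = (f'_±)⁻¹(r(y)/α)` and `κ = inf_y log g(y) > −∞`. -/
theorem stmt_11 {d : ℕ} (pdata ppre g : EuclideanSpace ℝ (Fin d) → ℝ)
    (hdata : IsProbDensity pdata) (hpre : IsProbDensity ppre)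
    (hg : Measurable g) (hgpos : ∀ y, 0 < g y)
    (hbdd : BddBelow (Set.range fun y => Real.log (g y)))
    (h1 : Integrable (fun y => g y * ppre y))
    (h2 : Integrable (fun y => g y ^ 2 * ppre y)) :
    tvDist (fun y => g y * ppre y / ∫ z, g z * ppre z) pdata ≤
      tvDist ppre pdata +
        (Real.exp (-(⨅ y, Real.log (g y))) / 2) * Real.sqrt (∫ y, g y ^ 2 * ppre y) := by
  obtain ⟨hpm, hpnn, hpint1⟩ := hpre
  obtain ⟨hdm, hdnn, hdint1⟩ := hdata
  have hpreInt : Integrable ppre := integrable_of_integral_eq_one hpint1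
  have hdataInt : Integrable pdata := integrable_of_integral_eq_one hdint1
  set κ := ⨅ y, Real.log (g y) with hκdef
  have hκle : ∀ y, Real.exp κ ≤ g y := fun y => by
    have : κ ≤ Real.log (g y) := ciInf_le hbdd y
    calc Real.exp κ ≤ Real.exp (Real.log (g y)) := Real.exp_le_exp.2 this
      _ = g y := Real.exp_log (hgpos y)
  set C := ∫ z, g z * ppre z with hCdef
  have hCge : Real.exp κ ≤ C := by
    have : Real.exp κ = ∫ y, Real.exp κ * ppre y := by
      rw [integral_const_mul, hpint1, mul_one]
    rw [this]
    exact integral_mono (hpreInt.const_mul _) h1 fun y =>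
      mul_le_mul_of_nonneg_right (hκle y) (hpnn y)
  have hCpos : 0 < C := lt_of_lt_of_le (Real.exp_pos κ) hCge
  set q := fun y => g y * ppre y / C with hqdef
  have hqInt : Integrable q := h1.div_const C
  have hqint1 : (∫ y, q y) = 1 := by
    simp only [hqdef, integral_div, ← hCdef, div_self hCpos.ne']
  -- pointwise form of q - ppre
  have hdiff : ∀ y, q y - ppre y = (g y / C - 1) * ppre y := fun y => by
    simp only [hqdef]
    ring
  set G2 := ∫ y, g y ^ 2 * ppre y with hG2def
  have hG2nn : 0 ≤ G2 :=
    integral_nonneg fun y => mul_nonneg (sq_nonneg _) (hpnn y)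
  -- integrable square term
  have hsq_eq : (fun y => (g y / C - 1) ^ 2 * ppre y) =
      fun y => g y ^ 2 * ppre y * (1 / C ^ 2) - g y * ppre y * (2 / C) + ppre y := by
    funext y; field_simp; ring
  have hsqInt : Integrable (fun y => (g y / C - 1) ^ 2 * ppre y) := by
    rw [hsq_eq]
    exact ((h2.mul_const _).sub (h1.mul_const _)).add hpreInt
  have hC0 : C ≠ 0 := hCpos.ne'
  have hInt3 : Integrable (fun y => g y ^ 2 * ppre y * (1 / C ^ 2) - g y * ppre y * (2 / C)) :=
    (h2.mul_const _).sub (h1.mul_const _)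
  have hIntA : Integrable (fun y => g y ^ 2 * ppre y * (1 / C ^ 2)) := h2.mul_const _
  have hIntB : Integrable (fun y => g y * ppre y * (2 / C)) := h1.mul_const _
  have hsq_int_eq : (∫ y, (g y / C - 1) ^ 2 * ppre y) = G2 / C ^ 2 - 1 := by
    rw [hsq_eq, integral_add hInt3 hpreInt, integral_sub hIntA hIntB,
      integral_mul_const, integral_mul_const, hpint1, ← hCdef, ← hG2def]
    field_simp
    ring
  -- Cauchy-Schwarz
  have hCS : (∫ y, |g y / C - 1| * ppre y) ≤ Real.sqrt (G2 / C ^ 2 - 1) := by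
    have hpq : (2 : ℝ).HolderConjugate 2 := Real.HolderConjugate.two_two
    set a := fun y => |g y / C - 1| * Real.sqrt (ppre y) with hadef
    set b := fun y => Real.sqrt (ppre y) with hbdef
    have ham : AEStronglyMeasurable a (volume : Measure (EuclideanSpace ℝ (Fin d))) :=
      (((hg.div_const C).sub measurable_const).abs.mul
        (Real.continuous_sqrt.measurable.comp hpm)).aestronglyMeasurable
    have hbm : AEStronglyMeasurable b (volume : Measure (EuclideanSpace ℝ (Fin d))) :=
      (Real.continuous_sqrt.measurable.comp hpm).aestronglyMeasurable
    have hasq : (fun y => a y ^ 2) = fun y => (g y / C - 1) ^ 2 * ppre y := by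
      funext y
      simp only [hadef, mul_pow, sq_abs, Real.sq_sqrt (hpnn y)]
    have hbsq : (fun y => b y ^ 2) = ppre := by
      funext y
      simp only [hbdef, Real.sq_sqrt (hpnn y)]
    have haL2 : MemLp a (ENNReal.ofReal 2) := by
      rw [show ENNReal.ofReal 2 = 2 by norm_num]
      exact (memLp_two_iff_integrable_sq ham).2 (by rw [hasq]; exact hsqInt)
    have hbL2 : MemLp b (ENNReal.ofReal 2) := by
      rw [show ENNReal.ofReal 2 = 2 by norm_num]
      exact (memLp_two_iff_integrable_sq hbm).2 (by rw [hbsq]; exact hpreInt)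
    have key := integral_mul_le_Lp_mul_Lq_of_nonneg hpq
      (Filter.Eventually.of_forall fun y => mul_nonneg (abs_nonneg _) (Real.sqrt_nonneg _))
      (Filter.Eventually.of_forall fun y => Real.sqrt_nonneg _) haL2 hbL2
    have hab : (fun y => a y * b y) = fun y => |g y / C - 1| * ppre y := by
      funext y
      simp only [hadef, hbdef, mul_assoc, Real.mul_self_sqrt (hpnn y)]
    have hrp : ∀ (f : EuclideanSpace ℝ (Fin d) → ℝ), (fun y => f y ^ (2:ℝ)) = fun y => f y ^ 2 := by
      intro f; funext y; rw [show (2:ℝ) = ((2:ℕ):ℝ) by norm_num, Real.rpow_natCast]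
    rw [hab] at key
    rw [hrp a, hrp b] at key
    rw [hasq, hbsq, hsq_int_eq, hpint1] at key
    calc (∫ y, |g y / C - 1| * ppre y) ≤ (G2 / C ^ 2 - 1) ^ (1/(2:ℝ)) * 1 ^ (1/(2:ℝ)) := key
      _ = Real.sqrt (G2 / C ^ 2 - 1) := by
          rw [Real.one_rpow, mul_one, ← Real.sqrt_eq_rpow]
  have hL1 : (∫ y, |q y - ppre y|) ≤ Real.exp (-κ) * Real.sqrt G2 := by
    have e : (fun y => |q y - ppre y|) = fun y => |g y / C - 1| * ppre y := by
      funext y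
      rw [hdiff y, abs_mul, abs_of_nonneg (hpnn y)]
    rw [e]
    calc (∫ y, |g y / C - 1| * ppre y) ≤ Real.sqrt (G2 / C ^ 2 - 1) := hCS
      _ ≤ Real.sqrt (G2 / C ^ 2) := Real.sqrt_le_sqrt (by linarith)
      _ = Real.sqrt G2 / C := by
          rw [Real.sqrt_div hG2nn, Real.sqrt_sq hCpos.le]
      _ ≤ Real.sqrt G2 / Real.exp κ :=
          div_le_div_of_nonneg_left (Real.sqrt_nonneg _) (Real.exp_pos κ) hCge
      _ = Real.exp (-κ) * Real.sqrt G2 := by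
          rw [Real.exp_neg, div_eq_mul_inv, mul_comm]
  calc tvDist q pdata ≤ tvDist q ppre + tvDist ppre pdata :=
        tv_triangle hqInt hdataInt hpreInt
    _ ≤ (∫ y, |q y - ppre y|) / 2 + tvDist ppre pdata :=
        add_le_add_left (tv_le_half hqInt hpreInt (by rw [hqint1, hpint1])) _
    _ ≤ Real.exp (-κ) * Real.sqrt G2 / 2 + tvDist ppre pdata :=
        add_le_add_left (by linarith : (∫ y, |q y - ppre y|) / 2 ≤ Real.exp (-κ) * Real.sqrt G2 / 2) _
    _ = tvDist ppre pdata + Real.exp (-κ) / 2 * Real.sqrt G2 := by ring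
end
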